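/- arXiv:1701.07991 — 3 statements merged into one kernel-verified Lean document; each statement's English description precedes it below -/
import Mathlib

section
/- The bankruptcy game is supermodular (convex): for all coalitions S, T ⊆ N, v(S ∪ T) + v(S ∩ T) ≥ v(S) + v(T). -/
/-- The bankruptcy game is supermodular (convex): for all coalitions
`S, T ⊆ N`, `v(S ∪ T) + v(S ∩ T) ≥ v(S) + v(T)`. -/
theorem bankruptcy_supermodular
    {N : Type*} [Fintype N] [DecidableEq N]
    (E : ℝ) (c : N → ℝ)
    (hE : 0 ≤ E) (hc : ∀ i, 0 ≤ c i) (hsum : E < ∑ i, c i)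
    (v : Finset N → ℝ)
    (hv : ∀ S : Finset N, v S = max (E - ∑ i ∈ Sᶜ, c i) 0)
    (S T : Finset N) :
    v S + v T ≤ v (S ∪ T) + v (S ∩ T) := by
  simp only [hv]
  have hU : (S ∪ T)ᶜ = Sᶜ ∩ Tᶜ := by simp [Finset.compl_union]
  have hI : (S ∩ T)ᶜ = Sᶜ ∪ Tᶜ := by simp [Finset.compl_inter]
  rw [hU, hI]
  set a := ∑ i ∈ Sᶜ, c i
  set b := ∑ i ∈ Tᶜ, c i
  set m := ∑ i ∈ Sᶜ ∩ Tᶜ, c i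
  set M := ∑ i ∈ Sᶜ ∪ Tᶜ, c i
  have hsum2 : M + m = a + b := Finset.sum_union_inter
  have h1 : m ≤ a :=
    Finset.sum_le_sum_of_subset_of_nonneg Finset.inter_subset_left
      (fun i _ _ => hc i)
  have h2 : m ≤ b :=
    Finset.sum_le_sum_of_subset_of_nonneg Finset.inter_subset_right
      (fun i _ _ => hc i)
  simp only [max_def]
  split_ifs <;> linarith
end

section
/- The mood m satisfies 0 ≤ m ≤ 1, i.e., ∑_i v({i}) ≤ E ≤ ∑_i (E − v(N∖{i})) for a bankruptcy game with at least two players. -/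
/-- The mood `m` satisfies `0 ≤ m ≤ 1`, i.e.
`∑ v({i}) ≤ E ≤ ∑ (E − v(N∖{i}))`, for a bankruptcy game with at least
two players. -/
theorem mood_mem_unit
    {N : Type*} [Fintype N] [DecidableEq N]
    (hcard : 2 ≤ Fintype.card N)
    (E : ℝ) (c : N → ℝ)
    (hE : 0 ≤ E) (hc : ∀ i, 0 ≤ c i) (hsum : E < ∑ i, c i)
    (v : Finset N → ℝ)
    (hv : ∀ S : Finset N, v S = max (E - ∑ j ∈ Sᶜ, c j) 0)
    (m : ℝ)
    (hm : m = (E - ∑ i, v {i}) / (∑ i, (E - v ({i}ᶜ)) - ∑ i, v {i}))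
    (hden : ∑ i, v {i} < ∑ i, (E - v ({i}ᶜ))) :
    (∑ i, v {i} ≤ E ∧ E ≤ ∑ i, (E - v ({i}ᶜ))) ∧ (0 ≤ m ∧ m ≤ 1) := by
  set C := ∑ j, c j with hCdef
  have hcompl : ∀ i : N, ∑ j ∈ ({i} : Finset N)ᶜ, c j = C - c i := by
    intro i
    have h := Finset.sum_compl_add_sum ({i} : Finset N) c
    simp only [Finset.sum_singleton] at h
    linarith
  have hv1 : ∀ i, v {i} = max (E - (C - c i)) 0 := by
    intro i; rw [hv, hcompl]
  have hv2 : ∀ i, v ({i}ᶜ) = max (E - c i) 0 := by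
    intro i; rw [hv, compl_compl, Finset.sum_singleton]
  -- Claim 1 : ∑ v({i}) ≤ E
  have claim1 : ∑ i, v {i} ≤ E := by
    classical
    set T := Finset.univ.filter (fun i => 0 < E - (C - c i)) with hT
    have key : ∑ i, v {i} = ∑ i ∈ T, (E - (C - c i)) := by
      rw [hT, Finset.sum_filter]
      apply Finset.sum_congr rfl
      intro i _
      rw [hv1 i]
      split_ifs with h
      · exact max_eq_left h.le
      · exact max_eq_right (not_lt.mp h)
    rw [key]
    rcases T.eq_empty_or_nonempty with h | h
    · simp [h]; exact hE
    · have h1 : ∑ i ∈ T, (E - (C - c i)) = T.card * (E - C) + ∑ i ∈ T, c i := by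
        have : ∀ i ∈ T, E - (C - c i) = (E - C) + c i := fun i _ => by ring
        rw [Finset.sum_congr rfl this, Finset.sum_add_distrib, Finset.sum_const,
          nsmul_eq_mul]
      have hcard1 : (1 : ℝ) ≤ T.card := by
        exact_mod_cast Nat.one_le_iff_ne_zero.mpr (Finset.card_ne_zero_of_mem h.choose_spec)
      have hEC : E - C ≤ 0 := by linarith
      have h2 : (T.card : ℝ) * (E - C) ≤ 1 * (E - C) :=
        mul_le_mul_of_nonpos_right hcard1 hEC
      have h3 : ∑ i ∈ T, c i ≤ C := by
        rw [hCdef]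
        exact Finset.sum_le_sum_of_subset_of_nonneg (Finset.subset_univ T)
          (fun i _ _ => hc i)
      linarith
  -- Claim 2 : E ≤ ∑ (E − v({i}ᶜ))
  have claim2 : E ≤ ∑ i, (E - v ({i}ᶜ)) := by
    classical
    have hrw : ∑ i, (E - v ({i}ᶜ)) =
        (Fintype.card N : ℝ) * E - ∑ i, max (E - c i) 0 := by
      rw [Finset.sum_sub_distrib, Finset.sum_const, nsmul_eq_mul, Finset.card_univ]
      congr 1
      exact Finset.sum_congr rfl fun i _ => hv2 i
    rw [hrw]
    set U := Finset.univ.filter (fun i => 0 < E - c i) with hU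
    have key : ∑ i, max (E - c i) 0 = ∑ i ∈ U, (E - c i) := by
      rw [hU, Finset.sum_filter]
      apply Finset.sum_congr rfl
      intro i _
      split_ifs with h
      · exact max_eq_left h.le
      · exact max_eq_right (not_lt.mp h)
    have h1 : ∑ i ∈ U, (E - c i) = U.card * E - ∑ i ∈ U, c i := by
      rw [Finset.sum_sub_distrib, Finset.sum_const, nsmul_eq_mul]
    have hn : (2 : ℝ) ≤ (Fintype.card N : ℝ) := by exact_mod_cast hcard
    have goal : ∑ i ∈ U, (E - c i) ≤ ((Fintype.card N : ℝ) - 1) * E := by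
      rcases eq_or_ne U Finset.univ with hUu | hUu
      · have hsumU : ∑ i ∈ U, c i = C := by rw [hUu, hCdef]
        have hcardU : (U.card : ℝ) = (Fintype.card N : ℝ) := by
          rw [hUu, Finset.card_univ]
        rw [h1, hsumU, hcardU]
        nlinarith
      · have hlt : U.card < Fintype.card N := by
          rw [← Finset.card_univ]
          exact Finset.card_lt_card (Finset.ssubset_univ_iff.mpr hUu)
        have hcardU : (U.card : ℝ) ≤ (Fintype.card N : ℝ) - 1 := by
          have : (U.card : ℝ) + 1 ≤ (Fintype.card N : ℝ) := by exact_mod_cast hlt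
          linarith
        have h2 : (U.card : ℝ) * E ≤ ((Fintype.card N : ℝ) - 1) * E :=
          mul_le_mul_of_nonneg_right hcardU hE
        have h3 : 0 ≤ ∑ i ∈ U, c i := Finset.sum_nonneg fun i _ => hc i
        rw [h1]; linarith
    rw [key]
    nlinarith
  refine ⟨⟨claim1, claim2⟩, ?_, ?_⟩
  · rw [hm]
    apply div_nonneg <;> linarith
  · rw [hm, div_le_one (by linarith)]
    linarith
end

section
/- The mood value belongs to the core of the bankruptcy game: for every coalition S ⊆ N, ∑_{i∈S} x_i^m ≥ v(S), and ∑_{i∈N} x_i^m = E. -/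
/-- The mood value belongs to the core of the bankruptcy game: for every
coalition `S ⊆ N`, `∑_{i∈S} x_i^m ≥ v(S)`, and `∑_{i∈N} x_i^m = E`. -/
theorem mood_value_mem_core
    {N : Type*} [Fintype N] [DecidableEq N]
    (E : ℝ) (c : N → ℝ)
    (hE : 0 ≤ E) (hc : ∀ i, 0 ≤ c i) (hsum : E < ∑ i, c i)
    (v : Finset N → ℝ)
    (hv : ∀ S : Finset N, v S = max (E - ∑ j ∈ Sᶜ, c j) 0)
    (hden : ∑ j, v {j} < ∑ j, (E - v ({j}ᶜ)))
    (m : ℝ)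
    (hm : m = (E - ∑ j, v {j}) / (∑ j, (E - v ({j}ᶜ)) - ∑ j, v {j}))
    (xm : N → ℝ)
    (hxm : ∀ i, xm i = v {i} + m * ((E - v ({i}ᶜ)) - v {i})) :
    (∀ S : Finset N, v S ≤ ∑ i ∈ S, xm i) ∧ ∑ i, xm i = E := by
  set C := ∑ i, c i with hC
  have hC0 : 0 < C := lt_of_le_of_lt hE hsum
  have hvi : ∀ i, v {i} = max (E - (C - c i)) 0 := by
    intro i
    rw [hv]
    have hs : ∑ j ∈ ({i} : Finset N)ᶜ, c j = C - c i := by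
      have h := Finset.sum_add_sum_compl ({i} : Finset N) c
      rw [Finset.sum_singleton] at h
      linarith
    rw [hs]
  have hvic : ∀ i, v ({i}ᶜ) = max (E - c i) 0 := by
    intro i
    rw [hv]
    simp [compl_compl]
  have hciC : ∀ i, c i ≤ C := fun i =>
    Finset.single_le_sum (fun j _ => hc j) (Finset.mem_univ i)
  have ha0 : ∀ i, 0 ≤ v {i} := fun i => by rw [hvi]; exact le_max_right _ _
  have hb : ∀ i, E - v ({i}ᶜ) = min E (c i) := by
    intro i
    rw [hvic]
    rcases le_total E (c i) with h | h
    · rw [max_eq_right (by linarith), min_eq_left h]; ring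
    · rw [max_eq_left (by linarith), min_eq_right h]; ring
  have hab : ∀ i, v {i} ≤ E - v ({i}ᶜ) := by
    intro i
    rw [hvi, hb]
    apply max_le
    · exact le_min (by linarith [hciC i]) (by linarith)
    · exact le_min hE (hc i)
  have hbc : ∀ i, E - v ({i}ᶜ) ≤ c i := fun i => by rw [hb]; exact min_le_right _ _
  have hb0 : ∀ i, 0 ≤ E - v ({i}ᶜ) := fun i => by rw [hb]; exact le_min hE (hc i)
  -- sum of singleton values is at most E
  have hsa : ∑ j, v {j} ≤ E := by
    have key : ∀ i, v {i} ≤ c i / C * E := by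
      intro i
      rw [hvi]
      apply max_le
      · rw [div_mul_eq_mul_div, le_div_iff₀ hC0]
        nlinarith [hciC i]
      · exact mul_nonneg (div_nonneg (hc i) hC0.le) hE
    calc ∑ j, v {j} ≤ ∑ j, c j / C * E :=
          Finset.sum_le_sum (fun j _ => key j)
      _ = (∑ j, c j) / C * E := by rw [← Finset.sum_mul, ← Finset.sum_div]
      _ = E := by rw [← hC]; field_simp
  -- E is at most sum of (E - v({j}ᶜ))
  have hEb : E ≤ ∑ j, (E - v ({j}ᶜ)) := by
    by_cases hex : ∃ i, E ≤ c i
    · obtain ⟨i, hi⟩ := hex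
      have h1 : E - v ({i}ᶜ) = E := by rw [hb]; exact min_eq_left hi
      calc E = E - v ({i}ᶜ) := h1.symm
        _ ≤ ∑ j, (E - v ({j}ᶜ)) :=
            Finset.single_le_sum (fun j _ => hb0 j) (Finset.mem_univ i)
    · push_neg at hex
      have h1 : ∀ j, E - v ({j}ᶜ) = c j := by
        intro j; rw [hb]; exact min_eq_right (le_of_lt (hex j))
      calc E ≤ C := le_of_lt hsum
        _ = ∑ j, (E - v ({j}ᶜ)) := by rw [hC]; exact Finset.sum_congr rfl (fun j _ => (h1 j).symm)
  have hD : 0 < ∑ j, (E - v ({j}ᶜ)) - ∑ j, v {j} := by linarith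
  have hm0 : 0 ≤ m := by
    rw [hm]; exact div_nonneg (by linarith) (by linarith)
  have hm1 : m ≤ 1 := by
    rw [hm, div_le_one hD]; linarith
  have hx0 : ∀ i, 0 ≤ xm i := by
    intro i
    rw [hxm]
    have := mul_nonneg hm0 (sub_nonneg.2 (hab i))
    linarith [ha0 i]
  have hxc : ∀ i, xm i ≤ c i := by
    intro i
    rw [hxm]
    have h1 : m * ((E - v ({i}ᶜ)) - v {i}) ≤ (E - v ({i}ᶜ)) - v {i} :=
      mul_le_of_le_one_left (sub_nonneg.2 (hab i)) hm1
    linarith [hbc i]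
  have hsumx : ∑ i, xm i = E := by
    have h1 : ∑ i, xm i = ∑ j, v {j} + m * (∑ j, (E - v ({j}ᶜ)) - ∑ j, v {j}) := by
      simp_rw [hxm]
      rw [Finset.sum_add_distrib, ← Finset.mul_sum, Finset.sum_sub_distrib]
    rw [h1, hm, div_mul_cancel₀ _ (ne_of_gt hD)]
    ring
  refine ⟨fun S => ?_, hsumx⟩
  rw [hv]
  apply max_le
  · have h1 : ∑ i ∈ Sᶜ, xm i ≤ ∑ i ∈ Sᶜ, c i :=
      Finset.sum_le_sum (fun i _ => hxc i)
    have h2 : ∑ i ∈ S, xm i + ∑ i ∈ Sᶜ, xm i = E := by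
      rw [Finset.sum_add_sum_compl]; exact hsumx
    linarith
  · exact Finset.sum_nonneg (fun i _ => hx0 i)
end
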